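/- For every odd natural number n ≥ 3 and integer p with gcd(p, n) = 1, ∑_{k=0}^{(n-3)/2} 1/sin²(p(2k+1)π/n) = (n² - 1)/6. -/

import Mathlib

open Real Finset

/-
For `ζ = exp (2πi p / n)`, a primitive `n`-th root of unity since `p` is prime to `n`, one has
`1 / sin² (p j π / n) = -4 ζ^j / (ζ^j - 1)²`. As `(x - 1) ∑_{j<n} j x^j = n` for every `n`-th root
of unity `x ≠ 1`, the sum of these terms over `j = 1, …, n - 1` becomes a double sum which
orthogonality of the powers of `ζ` evaluates to `(n² - 1) / 3`. For odd `n`, the reflection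
`j ↦ n - j` exchanges the odd and the even `j` in `1, …, n - 1` and preserves `sin² (p j π / n)`,
so the odd `j = 2k + 1` contribute exactly half of that sum.
-/

section

variable {R : Type*} [CommRing R]

theorem two_mul_sum_range_natCast (n : ℕ) : 2 * ∑ i ∈ range n, (i : R) = n * (n - 1) := by
  induction n with
  | zero => simp
  | succ n ih => rw [sum_range_succ, mul_add, ih]; push_cast; ring

theorem six_mul_sum_range_natCast_mul_sub (n : ℕ) :
    6 * ∑ i ∈ range n, (i : R) * (n - 1 - i) = n * (n - 1) * (n - 2) := by
  induction n with
  | zero => simp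
  | succ n ih =>
    have hsplit : ∑ i ∈ range n, (i : R) * ((n + 1 : ℕ) - 1 - i)
        = ∑ i ∈ range n, (i : R) * (n - 1 - i) + ∑ i ∈ range n, (i : R) := by
      rw [← sum_add_distrib]; push_cast; exact sum_congr rfl fun i _ => by ring
    rw [sum_range_succ, hsplit, mul_add, mul_add, ih]
    push_cast
    linear_combination 3 * two_mul_sum_range_natCast (R := R) n

theorem geom_sum_eq_zero_of_pow_eq_one [IsDomain R] {x : R} {n : ℕ} (hxn : x ^ n = 1)
    (hx : x ≠ 1) : ∑ j ∈ range n, x ^ j = 0 := by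
  have := geom_sum_mul x n
  rw [hxn, sub_self] at this
  exact (mul_eq_zero.mp this).resolve_right (sub_ne_zero.mpr hx)

theorem sub_one_mul_sum_range_natCast_mul_pow [IsDomain R] {x : R} {n : ℕ} (hxn : x ^ n = 1)
    (hx : x ≠ 1) : (x - 1) * ∑ j ∈ range n, (j : R) * x ^ j = n := by
  have key : ∀ m : ℕ, (x - 1) * ∑ j ∈ range m, (j : R) * x ^ j
      = (m - 1) * x ^ m - ∑ j ∈ range m, x ^ j + 1 := by
    intro m
    induction m with
    | zero => simp
    | succ m ih => rw [sum_range_succ, sum_range_succ, mul_add, ih]; push_cast; ring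
  rw [key, hxn, geom_sum_eq_zero_of_pow_eq_one hxn hx]; ring

end

namespace IsPrimitiveRoot

variable {R : Type*} [CommRing R] [IsDomain R] {ζ : R} {n : ℕ}

theorem sum_range_pow_pow (hζ : IsPrimitiveRoot ζ n) (m : ℕ) :
    ∑ k ∈ range n, (ζ ^ m) ^ k = if n ∣ m then (n : R) else 0 := by
  split_ifs with h
  · simp [(hζ.pow_eq_one_iff_dvd m).mpr h]
  · have hne : ζ ^ m ≠ 1 := fun h1 => h ((hζ.pow_eq_one_iff_dvd m).mp h1)
    refine geom_sum_eq_zero_of_pow_eq_one ?_ hne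
    rw [← pow_mul, mul_comm, pow_mul, hζ.pow_eq_one, one_pow]

theorem six_mul_sum_range_pow_mul_sq (hζ : IsPrimitiveRoot ζ n) :
    6 * ∑ k ∈ range n, ζ ^ k * (∑ j ∈ range n, (j : R) * (ζ ^ k) ^ j) ^ 2
      = n ^ 2 * (n - 1) * (n - 2) := by
  have hexpand : ∀ k, ζ ^ k * (∑ j ∈ range n, (j : R) * (ζ ^ k) ^ j) ^ 2
      = ∑ i ∈ range n, ∑ j ∈ range n, (i : R) * j * (ζ ^ (i + j + 1)) ^ k := by
    intro k
    rw [sq, sum_mul_sum, mul_sum]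
    refine sum_congr rfl fun i _ => ?_
    rw [mul_sum]
    refine sum_congr rfl fun j _ => ?_
    ring
  have hinner : ∀ i ∈ range n,
      ∑ j ∈ range n, (i : R) * j * (if n ∣ i + j + 1 then (n : R) else 0)
        = n * (i * (n - 1 - i)) := by
    intro i hi
    have hi : i < n := mem_range.mp hi
    -- `1 ≤ i + j + 1 < 2 * n`
    have hdvd : ∀ j ∈ range n, (n ∣ i + j + 1 ↔ n - 1 - i = j) := by
      intro j hj
      have hj : j < n := mem_range.mp hj
      constructor
      · rintro ⟨c, hc⟩
        rcases c with _ | _ | c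
        · omega
        · omega
        · nlinarith
      · rintro rfl; exact ⟨1, by omega⟩
    rw [sum_congr rfl fun j hj => by rw [if_congr (hdvd j hj) rfl rfl, mul_ite, mul_zero],
      sum_ite_eq, if_pos (mem_range.mpr (by omega)), Nat.sub_sub, Nat.cast_sub (by omega)]
    push_cast; ring
  have hswap : ∑ k ∈ range n, ζ ^ k * (∑ j ∈ range n, (j : R) * (ζ ^ k) ^ j) ^ 2
      = ∑ i ∈ range n, ∑ j ∈ range n, (i : R) * j * ∑ k ∈ range n, (ζ ^ (i + j + 1)) ^ k := by
    simp_rw [hexpand, mul_sum]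
    rw [sum_comm]
    exact sum_congr rfl fun i _ => sum_comm
  simp_rw [hswap, hζ.sum_range_pow_pow]
  rw [sum_congr rfl hinner, ← mul_sum, mul_left_comm, six_mul_sum_range_natCast_mul_sub]
  ring

end IsPrimitiveRoot

theorem IsPrimitiveRoot.sum_pow_div_pow_sub_one_sq {K : Type*} [Field K] [CharZero K] {ζ : K}
    {n : ℕ} (hζ : IsPrimitiveRoot ζ n) (hn : 0 < n) :
    ∑ k ∈ Ico 1 n, ζ ^ k / (ζ ^ k - 1) ^ 2 = -((n : K) ^ 2 - 1) / 12 := by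
  set S : ℕ → K := fun k => ∑ j ∈ range n, (j : K) * (ζ ^ k) ^ j with hS
  have hn0 : (n : K) ≠ 0 := Nat.cast_ne_zero.mpr hn.ne'
  have hterm : ∀ k ∈ Ico 1 n, ζ ^ k / (ζ ^ k - 1) ^ 2 = ζ ^ k * S k ^ 2 / n ^ 2 := by
    intro k hk
    obtain ⟨hk1, hk2⟩ := mem_Ico.mp hk
    have hζk : ζ ^ k ≠ 1 := hζ.pow_ne_one_of_pos_of_lt (by omega) hk2
    have hSk : (ζ ^ k - 1) * S k = n := sub_one_mul_sum_range_natCast_mul_pow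
      (by rw [← pow_mul, mul_comm, pow_mul, hζ.pow_eq_one, one_pow]) hζk
    rw [← hSk]
    have : S k ≠ 0 := right_ne_zero_of_mul (hSk ▸ hn0)
    field_simp
  have hsplit : ∑ k ∈ range n, ζ ^ k * S k ^ 2 = S 0 ^ 2 + ∑ k ∈ Ico 1 n, ζ ^ k * S k ^ 2 := by
    rw [range_eq_Ico, sum_eq_sum_Ico_succ_bot hn, pow_zero, one_mul]
  have hS0 : 2 * S 0 = n * (n - 1) := by
    simpa only [hS, pow_zero, one_pow, mul_one] using two_mul_sum_range_natCast (R := K) n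
  have hfull : 6 * ∑ k ∈ range n, ζ ^ k * S k ^ 2 = n ^ 2 * (n - 1) * (n - 2) :=
    hζ.six_mul_sum_range_pow_mul_sq
  rw [hsplit] at hfull
  rw [sum_congr rfl hterm, ← sum_div]
  field_simp
  linear_combination 2 * hfull - 3 * (2 * S 0 + n * (n - 1)) * hS0

-- Also true when `sin z = 0`: then `exp (2 * z * I) = 1` and both sides are `0`.
theorem Complex.inv_sin_sq (z : ℂ) :
    (sin z ^ 2)⁻¹ = -4 * (exp (2 * z * I) / (exp (2 * z * I) - 1) ^ 2) := by
  have hu : exp (z * I) ≠ 0 := exp_ne_zero _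
  have key : (exp (2 * z * I) - 1) ^ 2 = -4 * exp (2 * z * I) * sin z ^ 2 := by
    rw [sin, show 2 * z * I = z * I + z * I by ring, exp_add, neg_mul z I, exp_neg]
    field_simp
    linear_combination 4 * (exp (z * I) ^ 2 - 1) ^ 2 * I_sq
  rw [key, mul_div_assoc', div_mul_cancel_left₀ (mul_ne_zero (by norm_num) (exp_ne_zero _))]

theorem sum_Ico_one_div_sin_sq (n : ℕ) (hn : 0 < n) (p : ℤ) (hp : IsCoprime p n) :
    ∑ j ∈ Ico 1 n, 1 / Real.sin (p * j * π / n) ^ 2 = ((n : ℝ) ^ 2 - 1) / 3 := by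
  have hζ := Complex.isPrimitiveRoot_exp_of_isCoprime p n hn.ne' hp
  have hterm : ∀ j : ℕ, 1 / Complex.sin (p * j * π / n) ^ 2
      = -4 * (Complex.exp (2 * π * Complex.I * (p / n)) ^ j
          / (Complex.exp (2 * π * Complex.I * (p / n)) ^ j - 1) ^ 2) := by
    intro j
    rw [one_div, Complex.inv_sin_sq, ← Complex.exp_nat_mul]
    ring_nf
  apply Complex.ofReal_injective
  push_cast
  rw [sum_congr rfl fun j _ => hterm j, ← mul_sum, hζ.sum_pow_div_pow_sub_one_sq hn]
  ring

theorem sum_Ico_eq_two_nsmul_sum_range_odd {M : Type*} [AddCommMonoid M] (h : ℕ → M) (m : ℕ)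
    (hh : ∀ j ≤ 2 * m + 1, h (2 * m + 1 - j) = h j) :
    ∑ j ∈ Ico 1 (2 * m + 1), h j = 2 • ∑ k ∈ range m, h (2 * k + 1) := by
  have hpairs : ∀ l, ∑ i ∈ range (2 * l), h (1 + i)
      = ∑ k ∈ range l, (h (2 * k + 1) + h (2 * k + 2)) := by
    intro l
    induction l with
    | zero => simp
    | succ l ih =>
      rw [show 2 * (l + 1) = 2 * l + 1 + 1 by ring, sum_range_succ, sum_range_succ, ih,
        sum_range_succ, add_assoc]
      congr 3 <;> ring
  have heven : ∑ k ∈ range m, h (2 * k + 2) = ∑ k ∈ range m, h (2 * k + 1) := by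
    rw [← sum_range_reflect]
    refine sum_congr rfl fun k hk => ?_
    have hk := mem_range.mp hk
    rw [← hh _ (by omega)]
    congr 1
    omega
  rw [sum_Ico_eq_sum_range, show 2 * m + 1 - 1 = 2 * m by omega, hpairs, sum_add_distrib, heven,
    two_nsmul]

theorem Real.sin_sq_int_mul_pi_sub (x : ℝ) (k : ℤ) : sin (k * π - x) ^ 2 = sin x ^ 2 := by
  rw [sin_int_mul_pi_sub, neg_sq, mul_pow, ← sq_abs ((-1 : ℝ) ^ k), abs_neg_one_zpow, one_pow,
    one_mul]

theorem stmt11 (n : ℕ) (hn : Odd n) (hn3 : 3 ≤ n) (p : ℤ) (hp : Int.gcd p n = 1) :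
    ∑ k ∈ Finset.range ((n - 3) / 2 + 1),
      1 / (Real.sin ((p : ℝ) * (2 * k + 1) * π / n)) ^ 2 = ((n : ℝ) ^ 2 - 1) / 6 := by
  obtain ⟨m, hm⟩ := hn
  have hn0 : (n : ℝ) ≠ 0 := Nat.cast_ne_zero.mpr (by omega)
  have hsymm : ∀ j ≤ 2 * m + 1,
      1 / sin (p * ((2 * m + 1 - j : ℕ) : ℝ) * π / n) ^ 2 = 1 / sin (p * j * π / n) ^ 2 := by
    intro j hj
    rw [← hm] at hj ⊢
    rw [Nat.cast_sub hj, show (p : ℝ) * (n - j) * π / n = p * π - p * j * π / n by field_simp,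
      Real.sin_sq_int_mul_pi_sub]
  have hsum :=
    sum_Ico_eq_two_nsmul_sum_range_odd (fun j : ℕ => 1 / sin (p * j * π / n) ^ 2) m hsymm
  rw [← hm, sum_Ico_one_div_sin_sq n (by omega) p (Int.isCoprime_iff_gcd_eq_one.mpr hp),
    two_nsmul] at hsum
  rw [show (n - 3) / 2 + 1 = m by omega]
  push_cast at hsum
  linarith
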